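/- Let ⟨·,·⟩ be the symmetric bilinear form on ℝ⁸ given by ⟨x,y⟩ = x₁y₁ + x₂y₂ + x₃y₃ + x₄y₄ − x₅y₅ − x₆y₆ − x₇y₇ − x₈y₈ (signature (4,4)). Fix vectors w, w* with ⟨w,w⟩ = ⟨w*,w*⟩ = 0 and ⟨w,w*⟩ = 1, and let V₀ = (span{w,w*})^⊥ (a 6-dimensional subspace on which the form has signature (3,3)). Then the assignment sending a triple (Σ, B, α) — where Σ ⊆ V₀ is a 3-dimensional subspace on which ⟨·,·⟩ is positive definite, B ∈ V₀, and α ∈ ℝ satisfies 2α + ⟨B,B⟩ > 0 — to the 4-dimensional subspace Π spanned by {σ − ⟨B,σ⟩·w : σ ∈ Σ} together with the vector α·w + w* + B, is a bijection from the set of such triples onto the set of 4-dimensional subspaces of ℝ⁸ on which ⟨·,·⟩ is positive definite. -/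
import Mathlib

/-- The symmetric bilinear form of signature `(4,4)` on `ℝ⁸`. -/
def form8 (x y : Fin 8 → ℝ) : ℝ :=
  x 0 * y 0 + x 1 * y 1 + x 2 * y 2 + x 3 * y 3
    - x 4 * y 4 - x 5 * y 5 - x 6 * y 6 - x 7 * y 7

lemma form8_comm (x y : Fin 8 → ℝ) : form8 x y = form8 y x := by
  simp [form8]; ring

lemma form8_add_left (x y z : Fin 8 → ℝ) : form8 (x + y) z = form8 x z + form8 y z := by
  simp [form8]; ring

lemma form8_add_right (x y z : Fin 8 → ℝ) : form8 x (y + z) = form8 x y + form8 x z := by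
  simp [form8]; ring

lemma form8_sub_left (x y z : Fin 8 → ℝ) : form8 (x - y) z = form8 x z - form8 y z := by
  simp [form8]; ring

lemma form8_sub_right (x y z : Fin 8 → ℝ) : form8 x (y - z) = form8 x y - form8 x z := by
  simp [form8]; ring

lemma form8_smul_left (c : ℝ) (x z : Fin 8 → ℝ) : form8 (c • x) z = c * form8 x z := by
  simp [form8]; ring

lemma form8_smul_right (c : ℝ) (x z : Fin 8 → ℝ) : form8 x (c • z) = c * form8 x z := by
  simp [form8]; ring

lemma form8_zero_left (z : Fin 8 → ℝ) : form8 0 z = 0 := by simp [form8]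

lemma form8_zero_right (z : Fin 8 → ℝ) : form8 z 0 = 0 := by simp [form8]

lemma form8_expand (t : ℝ) (x y : Fin 8 → ℝ) :
    form8 (t • x + y) (t • x + y) = t ^ 2 * form8 x x + 2 * t * form8 x y + form8 y y := by
  simp [form8]; ring

/-- The linear functional `y ↦ form8 x y`. -/
def formW (x : Fin 8 → ℝ) : (Fin 8 → ℝ) →ₗ[ℝ] ℝ where
  toFun y := form8 x y
  map_add' y z := form8_add_right x y z
  map_smul' c y := form8_smul_right c x y

@[simp] lemma formW_apply (x y : Fin 8 → ℝ) : formW x y = form8 x y := rfl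

/-- The shear `s ↦ s - ⟨B,s⟩ • w`. -/
def Lmap (w B : Fin 8 → ℝ) : (Fin 8 → ℝ) →ₗ[ℝ] (Fin 8 → ℝ) where
  toFun s := s - form8 B s • w
  map_add' s t := by
    rw [form8_add_right, add_smul]; abel
  map_smul' c s := by
    simp only [RingHom.id_apply]
    show c • s - form8 B (c • s) • w = c • (s - form8 B s • w)
    rw [form8_smul_right, smul_sub, smul_smul]

@[simp] lemma Lmap_apply (w B s : Fin 8 → ℝ) : Lmap w B s = s - form8 B s • w := rfl

lemma Lmap_injective {w B : Fin 8 → ℝ} (hBw : form8 B w = 0) :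
    Function.Injective (Lmap w B) := by
  rw [← LinearMap.ker_eq_bot, LinearMap.ker_eq_bot']
  intro s hs
  simp only [Lmap_apply, sub_eq_zero] at hs
  have h1 : form8 B s = 0 := by
    conv_lhs => rw [hs]
    rw [form8_smul_right, hBw, mul_zero]
  rw [hs, h1, zero_smul]

/-- The data of a triple `(Σ, B, α)`: a positive definite 3-dimensional
subspace `Σ` of `V₀ = (span{w, w*})^⊥`, a vector `B ∈ V₀`, and a real number
`α` with `2α + ⟨B,B⟩ > 0`. -/
structure Triple8 (w wst : Fin 8 → ℝ) where
  /-- The positive definite 3-plane `Σ ⊆ V₀`. -/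
  S : Submodule ℝ (Fin 8 → ℝ)
  /-- The `B`-field vector `B ∈ V₀`. -/
  B : Fin 8 → ℝ
  /-- The real number `α`. -/
  a : ℝ
  hS_sub : ∀ s ∈ S, form8 w s = 0 ∧ form8 wst s = 0
  hS_dim : Module.finrank ℝ S = 3
  hS_pos : ∀ s ∈ S, s ≠ 0 → 0 < form8 s s
  hB : form8 w B = 0 ∧ form8 wst B = 0
  ha : 0 < 2 * a + form8 B B

/-- The 4-plane associated to a triple `(Σ, B, α)`: the span of
`{σ - ⟨B,σ⟩•w : σ ∈ Σ}` together with `α•w + w* + B`. -/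
def tripleSpan (w wst : Fin 8 → ℝ) (T : Triple8 w wst) :
    Submodule ℝ (Fin 8 → ℝ) :=
  Submodule.span ℝ
    (insert (T.a • w + wst + T.B) {v | ∃ s ∈ T.S, v = s - form8 T.B s • w})

set_option linter.unusedSectionVars false

section Triple

variable {w wst : Fin 8 → ℝ}

/-- The distinguished vector of a triple. -/
noncomputable def tv (T : Triple8 w wst) : Fin 8 → ℝ := T.a • w + wst + T.B

lemma tripleSpan_eq (T : Triple8 w wst) :
    tripleSpan w wst T = (ℝ ∙ tv T) ⊔ T.S.map (Lmap w T.B) := by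
  have himg : {v | ∃ s ∈ T.S, v = s - form8 T.B s • w} = (Lmap w T.B) '' (T.S : Set (Fin 8 → ℝ)) := by
    ext x
    simp only [Set.mem_setOf_eq, Set.mem_image, SetLike.mem_coe, Lmap_apply]
    exact ⟨fun ⟨s, hs, h⟩ => ⟨s, hs, h.symm⟩, fun ⟨s, hs, h⟩ => ⟨s, hs, h.symm⟩⟩
  rw [tripleSpan, Submodule.span_insert, himg, ← Submodule.map_span, Submodule.span_eq]
  rfl

lemma mem_tripleSpan_iff (T : Triple8 w wst) (p : Fin 8 → ℝ) :
    p ∈ tripleSpan w wst T ↔ ∃ t : ℝ, ∃ s ∈ T.S, p = t • tv T + Lmap w T.B s := by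
  rw [tripleSpan_eq, Submodule.mem_sup]
  constructor
  · rintro ⟨y, hy, z, hz, rfl⟩
    rw [Submodule.mem_span_singleton] at hy
    obtain ⟨t, rfl⟩ := hy
    obtain ⟨s, hs, rfl⟩ := Submodule.mem_map.mp hz
    exact ⟨t, s, hs, rfl⟩
  · rintro ⟨t, s, hs, rfl⟩
    exact ⟨t • tv T, Submodule.mem_span_singleton.mpr ⟨t, rfl⟩, _,
      Submodule.mem_map.mpr ⟨s, hs, rfl⟩, rfl⟩

variable (hw : form8 w w = 0) (hwst : form8 wst wst = 0) (hpair : form8 w wst = 1)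
include hw hwst hpair

lemma form8_w_tv (T : Triple8 w wst) : form8 w (tv T) = 1 := by
  rw [tv, form8_add_right, form8_add_right, form8_smul_right, hw, hpair, T.hB.1]; ring

lemma form8_wst_tv (T : Triple8 w wst) : form8 wst (tv T) = T.a := by
  have h1 : form8 wst w = 1 := by rw [form8_comm]; exact hpair
  rw [tv, form8_add_right, form8_add_right, form8_smul_right, h1, hwst, T.hB.2]; ring

lemma form8_vv (a : ℝ) (B : Fin 8 → ℝ) (hB1 : form8 w B = 0) (hB2 : form8 wst B = 0) :
    form8 (a • w + wst + B) (a • w + wst + B) = 2 * a + form8 B B := by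
  have h1 : form8 wst w = 1 := by rw [form8_comm]; exact hpair
  have h2 : form8 B w = 0 := by rw [form8_comm]; exact hB1
  have h3 : form8 B wst = 0 := by rw [form8_comm]; exact hB2
  rw [form8_add_left, form8_add_left, form8_add_right, form8_add_right, form8_add_right,
    form8_add_right, form8_add_right, form8_add_right, form8_smul_left, form8_smul_left,
    form8_smul_left, form8_smul_right, form8_smul_right, form8_smul_right,
    hw, hwst, hpair, h1, h2, h3, hB1, hB2]
  ring

lemma form8_tv_tv (T : Triple8 w wst) : form8 (tv T) (tv T) = 2 * T.a + form8 T.B T.B :=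
  form8_vv hw hwst hpair T.a T.B T.hB.1 T.hB.2

lemma form8_w_Lmap (T : Triple8 w wst) {s : Fin 8 → ℝ} (hs : s ∈ T.S) :
    form8 w (Lmap w T.B s) = 0 := by
  rw [Lmap_apply, form8_sub_right, form8_smul_right, hw, (T.hS_sub s hs).1]; ring

lemma form8_tv_Lmap (T : Triple8 w wst) {s : Fin 8 → ℝ} (hs : s ∈ T.S) :
    form8 (tv T) (Lmap w T.B s) = 0 := by
  have h1 : form8 wst w = 1 := by rw [form8_comm]; exact hpair
  have h2 : form8 T.B w = 0 := by rw [form8_comm]; exact T.hB.1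
  have h4 : form8 wst s = 0 := (T.hS_sub s hs).2
  have h5 : form8 w s = 0 := (T.hS_sub s hs).1
  rw [tv, Lmap_apply, form8_sub_right, form8_add_left, form8_add_left,
    form8_smul_left, form8_smul_right, form8_add_left, form8_add_left, form8_smul_left,
    hw, h1, h2, h4, h5]
  ring

lemma form8_Lmap_Lmap (T : Triple8 w wst) {s s' : Fin 8 → ℝ} (hs : s ∈ T.S) (hs' : s' ∈ T.S) :
    form8 (Lmap w T.B s) (Lmap w T.B s') = form8 s s' := by
  have h5 : form8 w s' = 0 := (T.hS_sub s' hs').1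
  have h6 : form8 s w = 0 := by rw [form8_comm]; exact (T.hS_sub s hs).1
  rw [Lmap_apply, Lmap_apply, form8_sub_left, form8_sub_right, form8_sub_right,
    form8_smul_left, form8_smul_left, form8_smul_right, form8_smul_right, hw, h5, h6]
  ring

lemma form8_decomp (T : Triple8 w wst) (t : ℝ) {s : Fin 8 → ℝ} (hs : s ∈ T.S) :
    form8 (t • tv T + Lmap w T.B s) (t • tv T + Lmap w T.B s)
      = t ^ 2 * (2 * T.a + form8 T.B T.B) + form8 s s := by
  rw [form8_expand, form8_tv_tv hw hwst hpair, form8_tv_Lmap hw hwst hpair T hs,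
    form8_Lmap_Lmap hw hwst hpair T hs hs]
  ring

lemma tv_ne_zero (T : Triple8 w wst) : tv T ≠ 0 := by
  intro h
  have h1 := form8_w_tv hw hwst hpair T
  rw [h, form8_zero_right] at h1
  norm_num at h1

omit hwst hpair in
lemma finrank_map_S (T : Triple8 w wst) :
    Module.finrank ℝ (T.S.map (Lmap w T.B)) = 3 := by
  have hBw : form8 T.B w = 0 := by rw [form8_comm]; exact T.hB.1
  rw [← T.hS_dim]
  exact (LinearEquiv.finrank_eq (Submodule.equivMapOfInjective _ (Lmap_injective hBw) T.S)).symm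

lemma inf_eq_bot (T : Triple8 w wst) : (ℝ ∙ tv T) ⊓ T.S.map (Lmap w T.B) = ⊥ := by
  rw [eq_bot_iff]
  intro x hx
  obtain ⟨hx1, hx2⟩ := Submodule.mem_inf.mp hx
  obtain ⟨t, rfl⟩ := Submodule.mem_span_singleton.mp hx1
  obtain ⟨s, hs, heq⟩ := Submodule.mem_map.mp hx2
  have h1 : form8 w (t • tv T) = t := by
    rw [form8_smul_right, form8_w_tv hw hwst hpair, mul_one]
  have h2 : form8 w (t • tv T) = 0 := by
    rw [← heq]; exact form8_w_Lmap hw hwst hpair T hs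
  have ht : t = 0 := by rw [← h1, h2]
  simp [ht]

lemma tripleSpan_finrank (T : Triple8 w wst) :
    Module.finrank ℝ (tripleSpan w wst T) = 4 := by
  rw [tripleSpan_eq]
  have h := Submodule.finrank_sup_add_finrank_inf_eq (ℝ ∙ tv T) (T.S.map (Lmap w T.B))
  rw [inf_eq_bot hw hwst hpair, finrank_bot, finrank_span_singleton (tv_ne_zero hw hwst hpair T),
    finrank_map_S hw T] at h
  omega

lemma tripleSpan_pos (T : Triple8 w wst) :
    ∀ p ∈ tripleSpan w wst T, p ≠ 0 → 0 < form8 p p := by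
  intro p hp hne
  obtain ⟨t, s, hs, rfl⟩ := (mem_tripleSpan_iff T p).mp hp
  rw [form8_decomp hw hwst hpair T t hs]
  by_cases hs0 : s = 0
  · subst hs0
    have ht : t ≠ 0 := by rintro rfl; exact hne (by simp [form8_zero_right])
    have h2 : (0:ℝ) < t ^ 2 := by positivity
    rw [form8_zero_left]
    nlinarith [T.ha]
  · have h1 : 0 < form8 s s := T.hS_pos s hs hs0
    nlinarith [sq_nonneg t, T.ha]

lemma decomp_t (T : Triple8 w wst) (t : ℝ) {s : Fin 8 → ℝ} (hs : s ∈ T.S) :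
    form8 w (t • tv T + Lmap w T.B s) = t := by
  rw [form8_add_right, form8_smul_right, form8_w_tv hw hwst hpair,
    form8_w_Lmap hw hwst hpair T hs]
  ring

lemma mem_K_of (T : Triple8 w wst) {p : Fin 8 → ℝ} (hp : p ∈ tripleSpan w wst T)
    (h0 : form8 w p = 0) : ∃ s ∈ T.S, p = Lmap w T.B s := by
  obtain ⟨t, s, hs, rfl⟩ := (mem_tripleSpan_iff T p).mp hp
  have ht : t = 0 := by rw [← decomp_t hw hwst hpair T t hs, h0]
  exact ⟨s, hs, by rw [ht, zero_smul, zero_add]⟩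

omit hw hwst hpair in
lemma tv_mem (T : Triple8 w wst) : tv T ∈ tripleSpan w wst T :=
  (mem_tripleSpan_iff T _).mpr ⟨1, 0, T.S.zero_mem, by simp [form8_zero_right]⟩

lemma tv_unique (T : Triple8 w wst) {p : Fin 8 → ℝ} (hp : p ∈ tripleSpan w wst T)
    (h1 : form8 w p = 1)
    (h2 : ∀ q ∈ tripleSpan w wst T, form8 w q = 0 → form8 p q = 0) : p = tv T := by
  obtain ⟨t, s, hs, rfl⟩ := (mem_tripleSpan_iff T p).mp hp
  have ht : t = 1 := by rw [← decomp_t hw hwst hpair T t hs, h1]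
  subst ht
  have hmem : Lmap w T.B s ∈ tripleSpan w wst T :=
    (mem_tripleSpan_iff T _).mpr ⟨0, s, hs, by rw [zero_smul, zero_add]⟩
  have hq := h2 (Lmap w T.B s) hmem (form8_w_Lmap hw hwst hpair T hs)
  rw [form8_add_left, form8_smul_left, form8_tv_Lmap hw hwst hpair T hs,
    form8_Lmap_Lmap hw hwst hpair T hs hs] at hq
  have hss : form8 s s = 0 := by linarith
  have hs0 : s = 0 := by
    by_contra h
    exact absurd hss (ne_of_gt (T.hS_pos s hs h))
  subst hs0
  simp [form8_zero_right]

lemma triple_injective :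
    Function.Injective (fun T : Triple8 w wst => tripleSpan w wst T) := by
  intro T₁ T₂ h
  simp only at h
  have htv : tv T₁ = tv T₂ := by
    apply tv_unique hw hwst hpair T₂ (h ▸ tv_mem T₁) (form8_w_tv hw hwst hpair T₁)
    intro q hq hq0
    rw [← h] at hq
    obtain ⟨s, hs, rfl⟩ := mem_K_of hw hwst hpair T₁ hq hq0
    exact form8_tv_Lmap hw hwst hpair T₁ hs
  have ha : T₁.a = T₂.a := by
    rw [← form8_wst_tv hw hwst hpair T₁, ← form8_wst_tv hw hwst hpair T₂, htv]
  have hB : T₁.B = T₂.B := by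
    have h2 := htv
    rw [tv, tv, ha] at h2
    exact add_left_cancel h2
  have hS : T₁.S = T₂.S := by
    have hBw₂ : form8 T₂.B w = 0 := by rw [form8_comm]; exact T₂.hB.1
    have hBw₁ : form8 T₁.B w = 0 := by rw [form8_comm]; exact T₁.hB.1
    have hinj := Lmap_injective (w := w) hBw₂
    have hinj₁ := Lmap_injective (w := w) hBw₁
    ext s
    constructor
    · intro hs
      have hmem : Lmap w T₁.B s ∈ tripleSpan w wst T₂ := by
        rw [← h]
        exact (mem_tripleSpan_iff T₁ _).mpr ⟨0, s, hs, by rw [zero_smul, zero_add]⟩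
      obtain ⟨s', hs', heq⟩ := mem_K_of hw hwst hpair T₂ hmem
        (form8_w_Lmap hw hwst hpair T₁ hs)
      rw [hB] at heq
      rw [hinj heq]
      exact hs'
    · intro hs
      have hmem : Lmap w T₂.B s ∈ tripleSpan w wst T₁ := by
        rw [h]
        exact (mem_tripleSpan_iff T₂ _).mpr ⟨0, s, hs, by rw [zero_smul, zero_add]⟩
      obtain ⟨s', hs', heq⟩ := mem_K_of hw hwst hpair T₁ hmem
        (form8_w_Lmap hw hwst hpair T₂ hs)
      rw [← hB] at heq
      rw [hinj₁ heq]
      exact hs'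
  cases T₁; cases T₂
  simp only [Triple8.mk.injEq]
  exact ⟨hS, hB, ha⟩

end Triple

lemma form8_expand2 (t : ℝ) (x y : Fin 8 → ℝ) :
    form8 (y + t • x) (y + t • x) = form8 y y + 2 * t * form8 x y + t ^ 2 * form8 x x := by
  simp [form8]; ring

/-- Projection to the first four coordinates. -/
def proj4 : (Fin 8 → ℝ) →ₗ[ℝ] (Fin 4 → ℝ) :=
  LinearMap.funLeft ℝ ℝ (Fin.castLE (by norm_num))

lemma mem_ker_proj4 {x : Fin 8 → ℝ} (hx : x ∈ LinearMap.ker proj4) :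
    x 0 = 0 ∧ x 1 = 0 ∧ x 2 = 0 ∧ x 3 = 0 := by
  rw [LinearMap.mem_ker] at hx
  have h : ∀ i : Fin 4, x (Fin.castLE (by norm_num) i) = 0 := fun i => congrFun hx i
  exact ⟨h 0, h 1, h 2, h 3⟩

lemma finrank_ker_proj4 : Module.finrank ℝ (LinearMap.ker proj4) = 4 := by
  have hsurj : Function.Surjective proj4 :=
    LinearMap.funLeft_surjective_of_injective ℝ ℝ _ (Fin.castLE_injective _)
  have h := LinearMap.finrank_range_add_finrank_ker proj4
  rw [LinearMap.range_eq_top.mpr hsurj, finrank_top, Module.finrank_fin_fun,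
    Module.finrank_fin_fun] at h
  omega

lemma psd_finrank_le (Q : Submodule ℝ (Fin 8 → ℝ)) (hQ : ∀ q ∈ Q, 0 ≤ form8 q q) :
    Module.finrank ℝ Q ≤ 4 := by
  have hinf : Q ⊓ LinearMap.ker proj4 = ⊥ := by
    rw [eq_bot_iff]
    intro x hx
    obtain ⟨hx1, hx2⟩ := Submodule.mem_inf.mp hx
    obtain ⟨e0, e1, e2, e3⟩ := mem_ker_proj4 hx2
    have h1 : 0 ≤ form8 x x := hQ x hx1
    have hform : form8 x x = -(x 4 * x 4 + x 5 * x 5 + x 6 * x 6 + x 7 * x 7) := by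
      rw [form8, e0, e1, e2, e3]; ring
    have h4 : x 4 = 0 := by nlinarith
    have h5 : x 5 = 0 := by nlinarith
    have h6 : x 6 = 0 := by nlinarith
    have h7 : x 7 = 0 := by nlinarith
    have hx0 : x = 0 := by
      funext i
      fin_cases i
      exacts [e0, e1, e2, e3, h4, h5, h6, h7]
    simp [hx0]
  have h := Submodule.finrank_sup_add_finrank_inf_eq Q (LinearMap.ker proj4)
  rw [hinf, finrank_bot, finrank_ker_proj4] at h
  have h2 : Module.finrank ℝ ↥(Q ⊔ LinearMap.ker proj4) ≤ 8 := by
    have h3 := Submodule.finrank_le (Q ⊔ LinearMap.ker proj4)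
    rwa [Module.finrank_fin_fun] at h3
  omega

section Surj

variable {w wst : Fin 8 → ℝ}
variable (hw : form8 w w = 0) (hwst : form8 wst wst = 0) (hpair : form8 w wst = 1)
include hw hwst hpair

lemma triple_surjective (P : Submodule ℝ (Fin 8 → ℝ)) (hdim : Module.finrank ℝ P = 4)
    (hpos : ∀ p ∈ P, p ≠ 0 → 0 < form8 p p) :
    ∃ T : Triple8 w wst, tripleSpan w wst T = P := by
  classical
  have hpair' : form8 wst w = 1 := by rw [form8_comm]; exact hpair
  have hw0 : w ≠ 0 := by
    rintro rfl; rw [form8_zero_left] at hpair; norm_num at hpair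
  have hwP : w ∉ P := by
    intro hmem
    have := hpos w hmem hw0
    rw [hw] at this
    exact lt_irrefl 0 this
  have hsemi : ∀ p ∈ P, 0 ≤ form8 p p := by
    intro p hp
    by_cases h : p = 0
    · rw [h, form8_zero_left]
    · exact le_of_lt (hpos p hp h)
  -- there is a vector in P not orthogonal to w
  have hex : ∃ p ∈ P, form8 w p ≠ 0 := by
    by_contra hcon
    push_neg at hcon
    have hQpsd : ∀ q ∈ P ⊔ (ℝ ∙ w), 0 ≤ form8 q q := by
      intro q hq
      obtain ⟨p, hp, z, hz, rfl⟩ := Submodule.mem_sup.mp hq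
      obtain ⟨t, rfl⟩ := Submodule.mem_span_singleton.mp hz
      rw [form8_expand2, hcon p hp, hw]
      have := hsemi p hp
      linarith
    have hinfQ : P ⊓ (ℝ ∙ w) = ⊥ := by
      rw [eq_bot_iff]
      intro x hx
      obtain ⟨hx1, hx2⟩ := Submodule.mem_inf.mp hx
      obtain ⟨t, rfl⟩ := Submodule.mem_span_singleton.mp hx2
      by_cases ht : t = 0
      · simp [ht]
      · exfalso
        have hmem : w ∈ P := by
          have h2 := P.smul_mem t⁻¹ hx1
          rwa [smul_smul, inv_mul_cancel₀ ht, one_smul] at h2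
        exact hwP hmem
    have hr := Submodule.finrank_sup_add_finrank_inf_eq P (ℝ ∙ w)
    rw [hinfQ, finrank_bot, hdim, finrank_span_singleton hw0] at hr
    have hle := psd_finrank_le (P ⊔ (ℝ ∙ w)) hQpsd
    omega
  obtain ⟨p₀, hp₀, hc⟩ := hex
  set v₀ : Fin 8 → ℝ := (form8 w p₀)⁻¹ • p₀ with hv₀def
  have hv₀P : v₀ ∈ P := P.smul_mem _ hp₀
  have hv₀w : form8 w v₀ = 1 := by
    rw [hv₀def, form8_smul_right, inv_mul_cancel₀ hc]
  have hv₀0 : v₀ ≠ 0 := by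
    intro h; rw [h, form8_zero_right] at hv₀w; norm_num at hv₀w
  -- the kernel K
  set K : Submodule ℝ (Fin 8 → ℝ) := P ⊓ LinearMap.ker (formW w) with hKdef
  have hKmem : ∀ k ∈ K, k ∈ P ∧ form8 w k = 0 := by
    intro k hk
    obtain ⟨h1, h2⟩ := Submodule.mem_inf.mp hk
    exact ⟨h1, h2⟩
  have hKmem' : ∀ k, k ∈ P → form8 w k = 0 → k ∈ K := by
    intro k h1 h2
    exact Submodule.mem_inf.mpr ⟨h1, h2⟩
  -- finrank K = 3
  have hPsup : P = (ℝ ∙ v₀) ⊔ K := by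
    apply le_antisymm
    · intro p hp
      rw [Submodule.mem_sup]
      refine ⟨form8 w p • v₀, Submodule.mem_span_singleton.mpr ⟨_, rfl⟩,
        p - form8 w p • v₀, hKmem' _ (Submodule.sub_mem P hp (P.smul_mem _ hv₀P)) ?_, by abel⟩
      rw [form8_sub_right, form8_smul_right, hv₀w]; ring
    · refine sup_le ?_ inf_le_left
      rw [Submodule.span_singleton_le_iff_mem]; exact hv₀P
  have hinfK : (ℝ ∙ v₀) ⊓ K = ⊥ := by
    rw [eq_bot_iff]
    intro x hx
    obtain ⟨hx1, hx2⟩ := Submodule.mem_inf.mp hx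
    obtain ⟨t, rfl⟩ := Submodule.mem_span_singleton.mp hx1
    have h2 := (hKmem _ hx2).2
    rw [form8_smul_right, hv₀w, mul_one] at h2
    simp [h2]
  have hKdim : Module.finrank ℝ K = 3 := by
    have hr := Submodule.finrank_sup_add_finrank_inf_eq (ℝ ∙ v₀) K
    rw [hinfK, finrank_bot, finrank_span_singleton hv₀0, ← hPsup, hdim] at hr
    omega
  -- Riesz representation on K
  have hformW_add : ∀ x y : Fin 8 → ℝ, formW (x + y) = formW x + formW y := by
    intro x y; ext z; simp [form8_add_left]
  have hformW_smul : ∀ (c : ℝ) (x : Fin 8 → ℝ), formW (c • x) = c • formW x := by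
    intro c x; ext z; simp [form8_smul_left]
  let g : K →ₗ[ℝ] Module.Dual ℝ K :=
    { toFun := fun k => (formW k.1).comp K.subtype
      map_add' := by
        intro k k'
        simp only [Submodule.coe_add, hformW_add]
        ext z; simp
      map_smul' := by
        intro c k
        simp only [Submodule.coe_smul, hformW_smul, RingHom.id_apply]
        ext z; simp }
  have hginj : Function.Injective g := by
    rw [← LinearMap.ker_eq_bot, LinearMap.ker_eq_bot']
    intro k hk
    have h1 : form8 k.1 k.1 = 0 := by
      have := LinearMap.congr_fun hk k
      simpa [g] using this
    have h2 : (k : Fin 8 → ℝ) = 0 := by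
      by_contra hne
      exact absurd h1 (ne_of_gt (hpos k.1 (hKmem _ k.2).1 hne))
    exact Subtype.ext h2
  have hgsurj : Function.Surjective g := by
    refine (LinearMap.injective_iff_surjective_of_finrank_eq_finrank ?_).mp hginj
    rw [Subspace.dual_finrank_eq]
  obtain ⟨k₀, hk₀⟩ := hgsurj ((formW v₀).comp K.subtype)
  have hk₀K := k₀.2
  have hk₀riesz : ∀ k ∈ K, form8 k₀.1 k = form8 v₀ k := by
    intro k hk
    have := LinearMap.congr_fun hk₀ ⟨k, hk⟩
    simpa [g] using this
  set v : Fin 8 → ℝ := v₀ - k₀.1 with hvdef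
  have hvP : v ∈ P := Submodule.sub_mem P hv₀P (hKmem _ hk₀K).1
  have hvw : form8 w v = 1 := by
    rw [hvdef, form8_sub_right, hv₀w, (hKmem _ hk₀K).2]; ring
  have hv0 : v ≠ 0 := by
    intro h; rw [h, form8_zero_right] at hvw; norm_num at hvw
  have hvK : ∀ k ∈ K, form8 v k = 0 := by
    intro k hk
    rw [hvdef, form8_sub_left, hk₀riesz k hk]; ring
  -- the data
  set a : ℝ := form8 wst v with hadef
  set B : Fin 8 → ℝ := v - a • w - wst with hBdef
  have hvdecomp : a • w + wst + B = v := by rw [hBdef]; abel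
  have hBw : form8 w B = 0 := by
    rw [hBdef, form8_sub_right, form8_sub_right, form8_smul_right, hw, hvw, hpair]; ring
  have hBwst : form8 wst B = 0 := by
    rw [hBdef, form8_sub_right, form8_sub_right, form8_smul_right, hwst, hpair', ← hadef]; ring
  have hBw' : form8 B w = 0 := by rw [form8_comm]; exact hBw
  set S : Submodule ℝ (Fin 8 → ℝ) := K.map (Lmap w wst) with hSdef
  have hSmem : ∀ s ∈ S, ∃ k ∈ K, s = k - form8 wst k • w := by
    intro s hs
    obtain ⟨k, hk, rfl⟩ := Submodule.mem_map.mp hs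
    exact ⟨k, hk, rfl⟩
  -- the key identity : Lmap w B ∘ Lmap w wst = id on K
  have hkey : ∀ k ∈ K, Lmap w B (Lmap w wst k) = k := by
    intro k hk
    have hwk : form8 w k = 0 := (hKmem _ hk).2
    have hBk : form8 B k = -form8 wst k := by
      rw [hBdef, form8_sub_left, form8_sub_left, form8_smul_left, hwk, hvK k hk]; ring
    simp only [Lmap_apply]
    rw [form8_sub_right, form8_smul_right, hBk, hBw']
    have : (-form8 wst k - form8 wst k * 0) = -form8 wst k := by ring
    rw [this, neg_smul, sub_neg_eq_add, sub_add_cancel]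
  have hS_sub : ∀ s ∈ S, form8 w s = 0 ∧ form8 wst s = 0 := by
    intro s hs
    obtain ⟨k, hk, rfl⟩ := hSmem s hs
    have hwk : form8 w k = 0 := (hKmem _ hk).2
    constructor
    · rw [form8_sub_right, form8_smul_right, hw, hwk]; ring
    · rw [form8_sub_right, form8_smul_right, hpair']; ring
  have hS_pos : ∀ s ∈ S, s ≠ 0 → 0 < form8 s s := by
    intro s hs hne
    obtain ⟨k, hk, rfl⟩ := hSmem s hs
    have hwk : form8 w k = 0 := (hKmem _ hk).2
    have hkw : form8 k w = 0 := by rw [form8_comm]; exact hwk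
    have hk0 : k ≠ 0 := by
      rintro rfl
      apply hne
      rw [form8_zero_right, zero_smul, sub_zero]
    have hform : form8 (k - form8 wst k • w) (k - form8 wst k • w) = form8 k k := by
      rw [form8_sub_left, form8_sub_right, form8_sub_right, form8_smul_left,
        form8_smul_right, form8_smul_left, form8_smul_right, hw, hwk, hkw]
      ring
    rw [hform]
    exact hpos k (hKmem _ hk).1 hk0
  have hS_dim : Module.finrank ℝ S = 3 := by
    have le1 : Module.finrank ℝ S ≤ Module.finrank ℝ K := Submodule.finrank_map_le _ _
    have hKle : K ≤ S.map (Lmap w B) := by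
      intro k hk
      exact Submodule.mem_map.mpr ⟨Lmap w wst k, Submodule.mem_map.mpr ⟨k, hk, rfl⟩, hkey k hk⟩
    have le2 : Module.finrank ℝ K ≤ Module.finrank ℝ S :=
      le_trans (Submodule.finrank_mono hKle) (Submodule.finrank_map_le _ _)
    omega
  have hvv : form8 v v = 2 * a + form8 B B := by
    conv_lhs => rw [← hvdecomp]
    exact form8_vv hw hwst hpair a B hBw hBwst
  have ha : 0 < 2 * a + form8 B B := by
    rw [← hvv]; exact hpos v hvP hv0
  refine ⟨⟨S, B, a, hS_sub, hS_dim, hS_pos, ⟨hBw, hBwst⟩, ha⟩, ?_⟩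
  have hle : tripleSpan w wst ⟨S, B, a, hS_sub, hS_dim, hS_pos, ⟨hBw, hBwst⟩, ha⟩ ≤ P := by
    rw [tripleSpan]
    apply Submodule.span_le.mpr
    rintro x hx
    rcases Set.mem_insert_iff.mp hx with rfl | ⟨s, hs, rfl⟩
    · show (a • w + wst + B) ∈ P
      rw [hvdecomp]; exact hvP
    · show (s - form8 B s • w) ∈ (P : Set (Fin 8 → ℝ))
      obtain ⟨k, hk, rfl⟩ := Submodule.mem_map.mp hs
      show Lmap w B (Lmap w wst k) ∈ P
      rw [hkey k hk]
      exact (hKmem _ hk).1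
  refine Submodule.eq_of_le_of_finrank_le hle ?_
  rw [hdim, tripleSpan_finrank hw hwst hpair]

end Surj

/-- Given a hyperbolic pair of light-like vectors `w, w*` with `⟨w,w*⟩ = 1`,
the assignment `(Σ, B, α) ↦ Π = span({σ - ⟨B,σ⟩•w : σ ∈ Σ} ∪ {α•w + w* + B})`
is a bijection from the set of triples (with `Σ ⊆ V₀` a positive definite
3-plane, `B ∈ V₀` and `2α + ⟨B,B⟩ > 0`) onto the set of 4-dimensional
subspaces of `ℝ⁸` on which `form8` is positive definite. -/
theorem triple_parametrization_bijective (w wst : Fin 8 → ℝ)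
    (hw : form8 w w = 0) (hwst : form8 wst wst = 0)
    (hpair : form8 w wst = 1) :
    (∀ T : Triple8 w wst,
        Module.finrank ℝ (tripleSpan w wst T) = 4 ∧
        (∀ p ∈ tripleSpan w wst T, p ≠ 0 → 0 < form8 p p)) ∧
    Function.Injective (fun T : Triple8 w wst => tripleSpan w wst T) ∧
    (∀ P : Submodule ℝ (Fin 8 → ℝ),
        Module.finrank ℝ P = 4 →
        (∀ p ∈ P, p ≠ 0 → 0 < form8 p p) →
        ∃ T : Triple8 w wst, tripleSpan w wst T = P) :=
  ⟨fun T => ⟨tripleSpan_finrank hw hwst hpair T, tripleSpan_pos hw hwst hpair T⟩,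
    triple_injective hw hwst hpair,
    fun P hdim hpos => triple_surjective hw hwst hpair P hdim hpos⟩
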